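/- arXiv:math/0404246 — 5 statements merged into one kernel-verified Lean document; each statement's English description precedes it below -/
import Mathlib

section
/- If Q, R : ℝ → ℝ → ℝ are analytic (or smooth) functions of (x,u) satisfying the system R_{x^κ}=0, R_{x²u} - ((κ-2)/3)Q_{x³}=0, R_{xu} - ((κ-1)/2)Q_{x²}=0, R_{u²} - κ Q_{xu}=0, Q_u = 0 for an integer κ ≥ 3, then there exist constants A, B, C, D, E⁰,…,E^{κ-1} such that Q(x,u) = A + Bx + Cx² and R(x,u) = (κ-1)Cxu + Du + E⁰ + E¹x + ⋯ + E^{κ-1}x^{κ-1}. -/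
open scoped ContDiff

private lemma infty_diff {f : ℝ → ℝ} (hf : ContDiff ℝ ∞ f) : Differentiable ℝ f :=
  hf.differentiable (by simp)

private lemma infty_deriv {f : ℝ → ℝ} (hf : ContDiff ℝ ∞ f) : ContDiff ℝ ∞ (deriv f) :=
  (contDiff_infty_iff_deriv.mp hf).2

private lemma infty_iteratedDeriv (n : ℕ) {f : ℝ → ℝ} (hf : ContDiff ℝ ∞ f) :
    ContDiff ℝ ∞ (iteratedDeriv n f) := by
  induction n with
  | zero => simpa [iteratedDeriv_zero] using hf
  | succ n ih => rw [iteratedDeriv_succ]; exact infty_deriv ih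

private lemma const_of_deriv_zero (f : ℝ → ℝ) (hf : Differentiable ℝ f)
    (h : ∀ x, deriv f x = 0) (x : ℝ) : f x = f 0 :=
  is_const_of_deriv_eq_zero hf h x 0

private lemma hasDerivAt_cmul (c x : ℝ) : HasDerivAt (fun y : ℝ => c * y) c x := by
  simpa using (hasDerivAt_id x).const_mul c

private lemma deriv_affine (a b u : ℝ) : deriv (fun t : ℝ => a + b * t) u = b := by
  have : HasDerivAt (fun t : ℝ => a + b * t) (0 + b) u :=
    (hasDerivAt_const u a).add (hasDerivAt_cmul b u)
  simpa using this.deriv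

private lemma integrate_affine (f : ℝ → ℝ) (hf : Differentiable ℝ f) (b c : ℝ)
    (h : ∀ x, deriv f x = b + c * x) (x : ℝ) :
    f x = f 0 + b * x + c / 2 * x ^ 2 := by
  have hP : ∀ y : ℝ, HasDerivAt (fun y : ℝ => b * y + c / 2 * y ^ 2) (b + c * y) y := by
    intro y
    have h1 : HasDerivAt (fun y : ℝ => b * y) b y := hasDerivAt_cmul b y
    have h2 : HasDerivAt (fun y : ℝ => c / 2 * y ^ 2) (c / 2 * (2 * y ^ 1)) y := by
      simpa using (hasDerivAt_pow 2 y).const_mul (c / 2)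
    have := h1.fun_add h2
    exact this.congr_deriv (by ring)
  have hd : ∀ y, deriv (fun y => f y - (b * y + c / 2 * y ^ 2)) y = 0 := by
    intro y
    rw [((hf y).hasDerivAt.fun_sub (hP y)).deriv, h y, sub_self]
  have hdd : Differentiable ℝ (fun y => f y - (b * y + c / 2 * y ^ 2)) :=
    fun y => ((hf y).hasDerivAt.sub (hP y)).differentiableAt
  have := const_of_deriv_zero _ hdd hd x
  simp only [mul_zero] at this
  nlinarith [this]

private lemma affine_of_deriv2_zero (g : ℝ → ℝ) (hg : ContDiff ℝ ∞ g)
    (h : ∀ v, deriv (deriv g) v = 0) (u : ℝ) : g u = g 0 + (g 1 - g 0) * u := by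
  have hdg : Differentiable ℝ (deriv g) := infty_diff (infty_deriv hg)
  have hdc : ∀ v, deriv g v = deriv g 0 := const_of_deriv_zero _ hdg h
  have hgu := integrate_affine g (infty_diff hg) (deriv g 0) 0
    (fun x => by rw [hdc x]; ring) u
  have hg1 := integrate_affine g (infty_diff hg) (deriv g 0) 0
    (fun x => by rw [hdc x]; ring) 1
  have h10 : deriv g 0 = g 1 - g 0 := by norm_num at hg1; linarith
  rw [← h10]
  norm_num at hgu
  linarith

private lemma poly_of_iteratedDeriv_zero :
    ∀ (n : ℕ) (f : ℝ → ℝ), ContDiff ℝ ∞ f → (∀ x, iteratedDeriv n f x = 0) →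
      ∃ E : Fin n → ℝ, ∀ x, f x = ∑ l : Fin n, E l * x ^ (l : ℕ) := by
  intro n
  induction n with
  | zero =>
    intro f hf h0
    exact ⟨Fin.elim0, fun x => by simpa using h0 x⟩
  | succ n ih =>
    intro f hf h0
    have hf' : ContDiff ℝ ∞ (deriv f) := infty_deriv hf
    have h0' : ∀ x, iteratedDeriv n (deriv f) x = 0 := by
      intro x; rw [← iteratedDeriv_succ']; exact h0 x
    obtain ⟨E, hE⟩ := ih (deriv f) hf' h0'
    set P : ℝ → ℝ := fun x => ∑ l : Fin n, E l / ((l : ℝ) + 1) * x ^ ((l : ℕ) + 1) with hP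
    have hPd : ∀ x, HasDerivAt P (∑ l : Fin n, E l * x ^ (l : ℕ)) x := by
      intro x
      have : HasDerivAt P (∑ l : Fin n,
          E l / ((l : ℝ) + 1) * ((((l : ℕ) + 1 : ℕ) : ℝ) * x ^ (l : ℕ))) x := by
        apply HasDerivAt.fun_sum
        intro i _
        simpa using (hasDerivAt_pow ((i : ℕ) + 1) x).const_mul (E i / ((i : ℝ) + 1))
      convert this using 1
      apply Finset.sum_congr rfl
      intro i _
      have hi : ((i : ℝ) + 1) ≠ 0 := by positivity
      push_cast
      field_simp
    have hF : ∀ x, deriv (fun x => f x - P x) x = 0 := by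
      intro x
      rw [((infty_diff hf x).hasDerivAt.fun_sub (hPd x)).deriv, hE x, sub_self]
    have hFd : Differentiable ℝ (fun x => f x - P x) :=
      fun x => ((infty_diff hf x).hasDerivAt.sub (hPd x)).differentiableAt
    have hcon := const_of_deriv_zero _ hFd hF
    have hP0 : P 0 = 0 := by simp [hP]
    refine ⟨Fin.cases (f 0) (fun l => E l / ((l : ℝ) + 1)), fun x => ?_⟩
    have hx := hcon x
    rw [hP0, sub_zero] at hx
    rw [Fin.sum_univ_succ]
    simp only [Fin.cases_zero, Fin.cases_succ, Fin.val_zero, pow_zero, mul_one, Fin.val_succ]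
    have : f x = f 0 + P x := by linarith
    rw [this, hP]

/-- the defining equations (e35) for infinitesimal symmetries of the
homogeneous ODE `u_{x^κ} = 0` force `Q = A + Bx + Cx²` and
`R = (κ-1)Cxu + Du + E⁰ + E¹x + ⋯ + E^{κ-1}x^{κ-1}`. -/
theorem stmt0 (κ : ℕ) (hκ : 3 ≤ κ) (Q R : ℝ → ℝ → ℝ)
    (hQ : ContDiff ℝ (⊤ : ℕ∞) (fun p : ℝ × ℝ => Q p.1 p.2))
    (hR : ContDiff ℝ (⊤ : ℕ∞) (fun p : ℝ × ℝ => R p.1 p.2))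
    (h1 : ∀ x u : ℝ, iteratedDeriv κ (fun s => R s u) x = 0)
    (h2 : ∀ x u : ℝ, deriv (fun t => iteratedDeriv 2 (fun s => R s t) x) u
          - (((κ : ℝ) - 2) / 3) * iteratedDeriv 3 (fun s => Q s u) x = 0)
    (h3 : ∀ x u : ℝ, deriv (fun t => deriv (fun s => R s t) x) u
          - (((κ : ℝ) - 1) / 2) * iteratedDeriv 2 (fun s => Q s u) x = 0)
    (h4 : ∀ x u : ℝ, iteratedDeriv 2 (fun t => R x t) u
          - (κ : ℝ) * deriv (fun t => deriv (fun s => Q s t) x) u = 0)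
    (h5 : ∀ x u : ℝ, deriv (fun t => Q x t) u = 0) :
    ∃ (A B C D : ℝ) (E : Fin κ → ℝ), ∀ x u : ℝ,
      Q x u = A + B * x + C * x ^ 2 ∧
      R x u = ((κ : ℝ) - 1) * C * x * u + D * u + ∑ l : Fin κ, E l * x ^ (l : ℕ) := by
  replace hQ : ContDiff ℝ ∞ (fun p : ℝ × ℝ => Q p.1 p.2) := hQ.of_le (mod_cast le_top)
  replace hR : ContDiff ℝ ∞ (fun p : ℝ × ℝ => R p.1 p.2) := hR.of_le (mod_cast le_top)
  -- slice smoothness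
  have hsliceR2 : ∀ x : ℝ, ContDiff ℝ ∞ (fun t => R x t) := fun x =>
    hR.comp (contDiff_const.prodMk contDiff_id)
  have hsliceQ2 : ∀ x : ℝ, ContDiff ℝ ∞ (fun t => Q x t) := fun x =>
    hQ.comp (contDiff_const.prodMk contDiff_id)
  have hsliceR1 : ∀ u : ℝ, ContDiff ℝ ∞ (fun s => R s u) := fun u =>
    hR.comp (contDiff_id.prodMk contDiff_const)
  have hsliceQ1 : ∀ u : ℝ, ContDiff ℝ ∞ (fun s => Q s u) := fun u =>
    hQ.comp (contDiff_id.prodMk contDiff_const)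
  -- Q independent of u
  have hQconst : ∀ x u : ℝ, Q x u = Q x 0 := fun x u =>
    const_of_deriv_zero _ (infty_diff (hsliceQ2 x)) (h5 x) u
  set q : ℝ → ℝ := fun x => Q x 0 with hqdef
  have hq : ContDiff ℝ ∞ q := hsliceQ1 0
  -- the Q term in h4 vanishes
  have hQterm : ∀ x u : ℝ, deriv (fun t => deriv (fun s => Q s t) x) u = 0 := by
    intro x u
    have : (fun t : ℝ => deriv (fun s => Q s t) x) = fun _ => deriv q x := by
      funext t; congr 1; funext s; exact hQconst s t
    rw [this, deriv_const]
  -- R is affine in u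
  set r0 : ℝ → ℝ := fun x => R x 0 with hr0def
  set r1 : ℝ → ℝ := fun x => R x 1 - R x 0 with hr1def
  have hr0 : ContDiff ℝ ∞ r0 := hsliceR1 0
  have hr1 : ContDiff ℝ ∞ r1 := (hsliceR1 1).sub (hsliceR1 0)
  have hit2 : ∀ (f : ℝ → ℝ), iteratedDeriv 2 f = deriv (deriv f) := by
    intro f
    rw [show (2 : ℕ) = 1 + 1 from rfl, iteratedDeriv_succ, iteratedDeriv_one]
  have hit3 : ∀ (f : ℝ → ℝ), iteratedDeriv 3 f = deriv (iteratedDeriv 2 f) := by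
    intro f
    rw [show (3 : ℕ) = 2 + 1 from rfl, iteratedDeriv_succ]
  have hRlin : ∀ x u : ℝ, R x u = r0 x + r1 x * u := by
    intro x u
    have hg2 : ∀ v, deriv (deriv (fun t => R x t)) v = 0 := by
      intro v
      have h := h4 x v
      rw [hQterm x v, mul_zero, sub_zero, hit2] at h
      exact h
    exact affine_of_deriv2_zero (fun t => R x t) (hsliceR2 x) hg2 u
  -- x-derivative of the t-slice
  have hD1 : ∀ (t x : ℝ), deriv (fun s => R s t) x = deriv r0 x + deriv r1 x * t := by
    intro t x
    have hfun : (fun s => R s t) = fun s => r0 s + r1 s * t := by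
      funext s; exact hRlin s t
    rw [hfun]
    exact ((infty_diff hr0 x).hasDerivAt.add
      (((infty_diff hr1 x).hasDerivAt).mul_const t)).deriv
  -- h3 reduces to an ODE for deriv r1
  have hQit2 : ∀ u x : ℝ, iteratedDeriv 2 (fun s => Q s u) x = iteratedDeriv 2 q x := by
    intro u x; congr 1; funext s; exact hQconst s u
  have h3' : ∀ x : ℝ, deriv r1 x = (((κ : ℝ) - 1) / 2) * iteratedDeriv 2 q x := by
    intro x
    have h := h3 x 0
    rw [hQit2 0 x] at h
    have hfn : (fun t : ℝ => deriv (fun s => R s t) x)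
        = fun t => deriv r0 x + deriv r1 x * t := by
      funext t; exact hD1 t x
    rw [hfn, deriv_affine] at h
    linarith
  -- h2 reduces to an ODE for iteratedDeriv 2 r1
  have hD2 : ∀ (t x : ℝ), iteratedDeriv 2 (fun s => R s t) x
      = iteratedDeriv 2 r0 x + iteratedDeriv 2 r1 x * t := by
    intro t x
    rw [hit2, hit2, hit2]
    have hfun : deriv (fun s => R s t) = fun s => deriv r0 s + deriv r1 s * t := by
      funext s; exact hD1 t s
    rw [hfun]
    exact ((infty_diff (infty_deriv hr0) x).hasDerivAt.add
      (((infty_diff (infty_deriv hr1) x).hasDerivAt).mul_const t)).deriv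
  have h2' : ∀ x : ℝ, iteratedDeriv 2 r1 x = (((κ : ℝ) - 2) / 3) * iteratedDeriv 3 q x := by
    intro x
    have h := h2 x 0
    have hq3 : iteratedDeriv 3 (fun s => Q s 0) x = iteratedDeriv 3 q x := rfl
    rw [hq3] at h
    have hfn : (fun t : ℝ => iteratedDeriv 2 (fun s => R s t) x)
        = fun t => iteratedDeriv 2 r0 x + iteratedDeriv 2 r1 x * t := by
      funext t; exact hD2 t x
    rw [hfn, deriv_affine] at h
    linarith
  -- combine: third derivative of q vanishes
  have hq3zero : ∀ x : ℝ, iteratedDeriv 3 q x = 0 := by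
    intro x
    have hr1two : iteratedDeriv 2 r1 x = (((κ : ℝ) - 1) / 2) * iteratedDeriv 3 q x := by
      rw [hit2]
      have hfun : deriv r1 = fun x => (((κ : ℝ) - 1) / 2) * iteratedDeriv 2 q x := by
        funext y; exact h3' y
      rw [hfun]
      have hdiff : DifferentiableAt ℝ (iteratedDeriv 2 q) x :=
        infty_diff (infty_iteratedDeriv 2 hq) x
      rw [deriv_const_mul _ hdiff, hit3]
    have h := h2' x
    rw [hr1two] at h
    have hκ' : (3 : ℝ) ≤ (κ : ℝ) := by exact_mod_cast hκ
    nlinarith [h]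
  -- q'' is constant
  have hq2const : ∀ x, iteratedDeriv 2 q x = iteratedDeriv 2 q 0 := by
    apply const_of_deriv_zero _ (infty_diff (infty_iteratedDeriv 2 hq))
    intro x
    rw [← hit3]
    exact hq3zero x
  -- deriv q is affine
  have hq1 : ∀ x, deriv q x = deriv q 0 + iteratedDeriv 2 q 0 * x := by
    intro x
    have h := integrate_affine (deriv q) (infty_diff (infty_deriv hq))
      (iteratedDeriv 2 q 0) 0
      (fun y => by
        rw [show deriv (deriv q) y = iteratedDeriv 2 q y from (congrFun (hit2 q) y).symm,
          hq2const y]; ring) x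
    norm_num at h
    linarith
  -- q is a quadratic polynomial
  have hqpoly : ∀ x, q x = q 0 + deriv q 0 * x + iteratedDeriv 2 q 0 / 2 * x ^ 2 :=
    integrate_affine q (infty_diff hq) (deriv q 0) (iteratedDeriv 2 q 0) hq1
  -- r1 is affine
  have hr1poly : ∀ x, r1 x = r1 0 + (((κ : ℝ) - 1) / 2) * iteratedDeriv 2 q 0 * x := by
    intro x
    have h := integrate_affine r1 (infty_diff hr1)
      ((((κ : ℝ) - 1) / 2) * iteratedDeriv 2 q 0) 0
      (fun y => by rw [h3' y, hq2const y]; ring) x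
    norm_num at h
    linarith
  -- r0 is a polynomial of degree < κ
  obtain ⟨E, hE⟩ := poly_of_iteratedDeriv_zero κ r0 hr0 (fun x => h1 x 0)
  refine ⟨q 0, deriv q 0, iteratedDeriv 2 q 0 / 2, r1 0, E, fun x u => ⟨?_, ?_⟩⟩
  · rw [hQconst x u]
    exact hqpoly x
  · rw [hRlin x u, hE x, hr1poly x]
    ring
end

section
/- For every integer κ ≥ 2, the solution space of the system of PDEs R_{x^κ}=0, R_{x²u} - ((κ-2)/3)Q_{x³}=0, R_{xu} - ((κ-1)/2)Q_{x²}=0, R_{u²} - κ Q_{xu}=0, Q_u=0 (for pairs of polynomial functions (Q,R) in two variables x, u over ℝ) is a vector space of dimension exactly κ + 4. -/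
open MvPolynomial

/-- partial derivative with respect to `x` (variable `0`). -/
noncomputable def dX : MvPolynomial (Fin 2) ℝ → MvPolynomial (Fin 2) ℝ :=
  fun p => MvPolynomial.pderiv (0 : Fin 2) p

/-- partial derivative with respect to `u` (variable `1`). -/
noncomputable def dU : MvPolynomial (Fin 2) ℝ → MvPolynomial (Fin 2) ℝ :=
  fun p => MvPolynomial.pderiv (1 : Fin 2) p

/-!
Since `Q_u = 0` and `R_uu = κ Q_xu = 0`, `Q` depends on `x` only and `R` is affine in `u`.
Differentiating the third equation in `x` and comparing with the second gives
`((κ + 1) / 6) Q_xxx = 0`, so `Q = a + b x + c x²`; the third equation then says `R_xu = (κ - 1) c`,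
and the first bounds the `x`-degree of `R` by `κ - 1`. Hence the shear
`(Q, R) ↦ (Q, R - (κ - 1) c x u)` maps the solutions onto the pairs of polynomials supported on
`{1, x, x²}` and on `{1, x, …, x^(κ-1), u}`, a space of dimension `3 + (κ + 1)`.
Each differential condition used here is a condition on the exponents of the monomials that occur.
-/

open Finsupp

namespace MvPolynomial

section CommSemiring

variable {σ R : Type*} [CommSemiring R]

theorem restrictSupport_inter (s t : Set (σ →₀ ℕ)) :
    restrictSupport R (s ∩ t) = restrictSupport R s ⊓ restrictSupport R t := by
  ext p
  simp [mem_restrictSupport_iff]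

theorem mem_restrictSupport_empty {p : MvPolynomial σ R} :
    p ∈ restrictSupport R ∅ ↔ p = 0 := by
  simp [mem_restrictSupport_iff]

variable [NoZeroDivisors R] [CharZero R]

theorem pderiv_mem_restrictSupport_iff {i : σ} {s : Set (σ →₀ ℕ)} {p : MvPolynomial σ R} :
    pderiv i p ∈ restrictSupport R s ↔
      p ∈ restrictSupport R {m | m i = 0 ∨ m - single i 1 ∈ s} := by
  simp only [mem_restrictSupport_iff, Set.subset_def, Finset.mem_coe, mem_support_iff,
    coeff_pderiv, Set.mem_ofPred_eq, ne_eq, mul_eq_zero, not_or]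
  refine ⟨fun h m hm => or_iff_not_imp_left.2 fun hmi => h (m - single i 1) ⟨?_, ?_⟩,
    fun h m hm => ?_⟩
  · rwa [tsub_add_cancel_of_le (single_le_iff.2 (Nat.one_le_iff_ne_zero.2 hmi))]
  · exact Nat.cast_add_one_ne_zero _
  · simpa using h _ hm.1

theorem iterate_pderiv_eq_zero_iff {i : σ} {n : ℕ} {p : MvPolynomial σ R} :
    (pderiv i)^[n] p = 0 ↔ p ∈ restrictSupport R {m | m i < n} := by
  induction n generalizing p with
  | zero => simp [mem_restrictSupport_empty]
  | succ n ih =>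
    rw [Function.iterate_succ_apply, ih, pderiv_mem_restrictSupport_iff]
    congr!
    simp only [Set.mem_ofPred_eq, tsub_apply, single_eq_same]
    omega

theorem pderiv_eq_zero_iff {i : σ} {p : MvPolynomial σ R} :
    pderiv i p = 0 ↔ p ∈ restrictSupport R {m | m i = 0} := by
  simpa using iterate_pderiv_eq_zero_iff (i := i) (n := 1) (p := p)

theorem pderiv_pderiv_eq_zero_iff {i j : σ} (hij : i ≠ j) {p : MvPolynomial σ R} :
    pderiv i (pderiv j p) = 0 ↔ p ∈ restrictSupport R {m | m i = 0 ∨ m j = 0} := by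
  rw [pderiv_eq_zero_iff, pderiv_mem_restrictSupport_iff]
  congr! 3 with m
  simp [hij, or_comm]

theorem eq_C_of_forall_pderiv_eq_zero {p : MvPolynomial σ R} (h : ∀ i, pderiv i p = 0) :
    p = C (coeff 0 p) := by
  classical
  refine MvPolynomial.ext _ _ fun m => ?_
  rw [coeff_C]
  split_ifs with hm
  · rw [hm]
  · by_contra hp
    obtain ⟨i, hi⟩ := Finsupp.ne_iff.1 (Ne.symm hm)
    exact hi ((mem_restrictSupport_iff R).1 (pderiv_eq_zero_iff.1 (h i)) (mem_support_iff.2 hp))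

end CommSemiring

theorem pderiv_comm {σ R : Type*} [CommRing R] (i j : σ) (p : MvPolynomial σ R) :
    pderiv i (pderiv j p) = pderiv j (pderiv i p) := by
  have h : ⁅pderiv i, pderiv j⁆ = (0 : Derivation R (MvPolynomial σ R) (MvPolynomial σ R)) :=
    derivation_ext fun k => by
      classical
      rw [Derivation.commutator_apply, pderiv_X, pderiv_X]
      by_cases hi : i = k <;> by_cases hj : j = k <;> simp [hi, hj]
  simpa [Derivation.commutator_apply, sub_eq_zero] using congr($h p)

section Field

variable {σ K : Type*} [Field K]

instance finite_restrictSupport (s : Finset (σ →₀ ℕ)) :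
    Module.Finite K (restrictSupport K (s : Set (σ →₀ ℕ))) :=
  Module.Finite.of_basis (basisRestrictSupport K _)

theorem finrank_restrictSupport (s : Finset (σ →₀ ℕ)) :
    Module.finrank K (restrictSupport K (s : Set (σ →₀ ℕ))) = s.card := by
  rw [Module.finrank_eq_card_basis (basisRestrictSupport K _)]
  simp

end Field

end MvPolynomial

theorem Submodule.finrank_prod {K M N : Type*} [Field K] [AddCommGroup M] [Module K M]
    [AddCommGroup N] [Module K N] (p : Submodule K M) (q : Submodule K N)
    [FiniteDimensional K p] [FiniteDimensional K q] :
    Module.finrank K (p.prod q) = Module.finrank K p + Module.finrank K q := by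
  have h : p.prod q = LinearMap.range (p.subtype.prodMap q.subtype) := by
    rw [LinearMap.range_prodMap, Submodule.range_subtype, Submodule.range_subtype]
  rw [h, LinearMap.finrank_range_of_inj (p.injective_subtype.prodMap q.injective_subtype),
    Module.finrank_prod]

def IsSolution (κ : ℕ) (p : MvPolynomial (Fin 2) ℝ × MvPolynomial (Fin 2) ℝ) : Prop :=
  dX^[κ] p.2 = 0 ∧
    dU (dX (dX p.2)) - MvPolynomial.C (((κ : ℝ) - 2) / 3) * dX (dX (dX p.1)) = 0 ∧
    dU (dX p.2) - MvPolynomial.C (((κ : ℝ) - 1) / 2) * dX (dX p.1) = 0 ∧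
    dU (dU p.2) - MvPolynomial.C (κ : ℝ) * dU (dX p.1) = 0 ∧
    dU p.1 = 0

theorem dX_eq_pderiv : dX = ⇑(pderiv (R := ℝ) (0 : Fin 2)) := rfl

theorem dU_eq_pderiv : dU = ⇑(pderiv (R := ℝ) (1 : Fin 2)) := rfl

theorem dU_dX_comm (p : MvPolynomial (Fin 2) ℝ) : dU (dX p) = dX (dU p) :=
  pderiv_comm 1 0 p

theorem dX_dX_eq_C {Q : MvPolynomial (Fin 2) ℝ} (hU : dU Q = 0) (h3 : dX (dX (dX Q)) = 0) :
    dX (dX Q) = C (2 * coeff (single 0 2) Q) := by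
  have hUXX : dU (dX (dX Q)) = 0 := by
    rw [dU_dX_comm, dU_dX_comm, hU]
    simp only [dX, map_zero]
  rw [eq_C_of_forall_pderiv_eq_zero (p := dX (dX Q)) (Fin.forall_fin_two.2 ⟨h3, hUXX⟩)]
  simp only [dX, coeff_pderiv, zero_add, ← single_add]
  norm_num
  ring

theorem isSolution_iff {κ : ℕ} {Q R : MvPolynomial (Fin 2) ℝ} :
    IsSolution κ (Q, R) ↔
      (dU Q = 0 ∧ dX (dX (dX Q)) = 0) ∧
        (dX^[κ] R = 0 ∧ dU (dU R) = 0 ∧ dU (dX R) = C ((κ - 1) * coeff (single 0 2) Q)) := by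
  have hUX : dU Q = 0 → dU (dX Q) = 0 := fun hU => by rw [dU_dX_comm, hU]; exact map_zero _
  constructor
  · rintro ⟨hκ, h2, h3, h4, hU⟩
    have h3' : dU (dX (dX R)) - C (((κ : ℝ) - 1) / 2) * dX (dX (dX Q)) = 0 := by
      have := congrArg (pderiv 0) h3
      rw [map_sub, pderiv_C_mul, map_zero] at this
      rwa [dU_dX_comm]
    have hQ3 : dX (dX (dX Q)) = 0 := by
      have h : (C (((κ : ℝ) - 1) / 2) - C (((κ : ℝ) - 2) / 3)) * dX (dX (dX Q)) = 0 := by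
        linear_combination h2 - h3'
      rw [← map_sub, mul_eq_zero, C_eq_zero] at h
      refine h.resolve_left ?_
      rw [show ((κ : ℝ) - 1) / 2 - ((κ : ℝ) - 2) / 3 = ((κ : ℝ) + 1) / 6 by ring]
      positivity
    refine ⟨⟨hU, hQ3⟩, hκ, ?_, ?_⟩
    · rwa [hUX hU, mul_zero, sub_zero] at h4
    · rw [sub_eq_zero.1 h3, dX_dX_eq_C hU hQ3, ← map_mul]
      congr 1
      ring
  · rintro ⟨⟨hU, h3⟩, hκ, hUU, hUXR⟩
    refine ⟨hκ, ?_, ?_, ?_, hU⟩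
    · rw [dU_dX_comm, hUXR, h3, mul_zero, sub_zero]; exact pderiv_C
    · rw [hUXR, dX_dX_eq_C hU h3, ← map_mul, ← map_sub, C_eq_zero]; ring
    · rw [hUU, hUX hU, mul_zero, sub_zero]

noncomputable def qExponents : Finset (Fin 2 →₀ ℕ) := Finset.Iic (single 0 2)

noncomputable def rExponents (κ : ℕ) : Finset (Fin 2 →₀ ℕ) :=
  Finset.Iic (single 0 (κ - 1)) ∪ {single 1 1}

theorem mem_qExponents {m : Fin 2 →₀ ℕ} : m ∈ qExponents ↔ m 0 < 3 ∧ m 1 = 0 := by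
  simp [qExponents, Finsupp.le_def, Fin.forall_fin_two, single_apply]
  omega

theorem mem_rExponents {κ : ℕ} (hκ : 1 ≤ κ) {m : Fin 2 →₀ ℕ} :
    m ∈ rExponents κ ↔ m 0 < κ ∧ m 1 = 0 ∨ m 0 = 0 ∧ m 1 = 1 := by
  simp [rExponents, Finsupp.le_def, Finsupp.ext_iff, Fin.forall_fin_two, single_apply]
  omega

theorem card_qExponents : qExponents.card = 3 := by
  simp [qExponents, Finsupp.card_Iic]

theorem card_rExponents {κ : ℕ} (hκ : 1 ≤ κ) : (rExponents κ).card = κ + 1 := by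
  rw [rExponents, Finset.card_union_of_disjoint, Finsupp.card_Iic]
  · obtain ⟨n, rfl⟩ := Nat.exists_eq_add_of_le' hκ
    rw [Nat.add_sub_cancel]
    by_cases hn : n = 0
    · simp [hn]
    · simp [support_single _ hn]
  · simp [Finsupp.le_def, Fin.forall_fin_two]

theorem mem_restrictSupport_qExponents_iff {Q : MvPolynomial (Fin 2) ℝ} :
    Q ∈ restrictSupport ℝ (qExponents : Set (Fin 2 →₀ ℕ)) ↔ dU Q = 0 ∧ dX (dX (dX Q)) = 0 := by
  have hs : {m : Fin 2 →₀ ℕ | m 1 = 0} ∩ {m | m 0 < 3} = qExponents := by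
    ext m
    simp [mem_qExponents, and_comm]
  change _ ↔ pderiv 1 Q = 0 ∧ (pderiv 0)^[3] Q = 0
  rw [pderiv_eq_zero_iff, iterate_pderiv_eq_zero_iff, ← Submodule.mem_inf,
    ← restrictSupport_inter, hs]

theorem mem_restrictSupport_rExponents_iff {κ : ℕ} (hκ : 2 ≤ κ) (c : ℝ)
    (R : MvPolynomial (Fin 2) ℝ) :
    R ∈ restrictSupport ℝ (rExponents κ : Set (Fin 2 →₀ ℕ)) ↔
      dX^[κ] (R + monomial (single 0 1 + single 1 1) c) = 0 ∧
        dU (dU (R + monomial (single 0 1 + single 1 1) c)) = 0 ∧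
        dU (dX (R + monomial (single 0 1 + single 1 1) c)) = C c := by
  have hs : {m : Fin 2 →₀ ℕ | m 0 < κ} ∩ ({m | m 1 < 2} ∩ {m | m 1 = 0 ∨ m 0 = 0}) =
      rExponents κ := by
    ext m
    simp [mem_rExponents (by omega : 1 ≤ κ)]
    omega
  have hXκ : dX^[κ] (monomial (single 0 1 + single 1 1) c) = 0 := by
    change (pderiv 0)^[κ] _ = 0
    rw [iterate_pderiv_eq_zero_iff, monomial_mem_restrictSupport]
    left
    simp
    omega
  have hUU : dU (dU (monomial (single 0 1 + single 1 1) c)) = 0 := by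
    simp [dU, pderiv_monomial]
  have hUX : dU (dX (monomial (single 0 1 + single 1 1) c)) = C c := by
    simp [dU, dX, pderiv_monomial]
  simp only [dX_eq_pderiv, dU_eq_pderiv] at hXκ hUU hUX ⊢
  rw [iterate_map_add, map_add, map_add, map_add, map_add, hXκ, hUU, hUX, add_zero, add_zero,
    add_eq_right, show pderiv 1 (pderiv 1 R) = (pderiv 1)^[2] R from rfl,
    iterate_pderiv_eq_zero_iff, iterate_pderiv_eq_zero_iff, pderiv_pderiv_eq_zero_iff (by decide),
    ← Submodule.mem_inf, ← Submodule.mem_inf, ← restrictSupport_inter, ← restrictSupport_inter, hs]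

noncomputable def shear (κ : ℕ) :
    (MvPolynomial (Fin 2) ℝ × MvPolynomial (Fin 2) ℝ) ≃ₗ[ℝ]
      MvPolynomial (Fin 2) ℝ × MvPolynomial (Fin 2) ℝ :=
  (LinearEquiv.refl ℝ _).skewProd (LinearEquiv.refl ℝ _)
    (-(lcoeff ℝ (single 0 2)).smulRight (monomial (single 0 1 + single 1 1) ((κ : ℝ) - 1)))

theorem shear_apply (κ : ℕ) (Q R : MvPolynomial (Fin 2) ℝ) :
    shear κ (Q, R) =
      (Q, R - monomial (single 0 1 + single 1 1) ((κ - 1) * coeff (single 0 2) Q)) := by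
  simp only [shear, LinearEquiv.skewProd_apply, LinearEquiv.refl_apply, LinearMap.neg_apply,
    LinearMap.smulRight_apply, lcoeff_apply, smul_monomial, smul_eq_mul, mul_comm,
    ← sub_eq_add_neg]

theorem isSolution_iff_shear_mem {κ : ℕ} (hκ : 2 ≤ κ)
    (p : MvPolynomial (Fin 2) ℝ × MvPolynomial (Fin 2) ℝ) :
    IsSolution κ p ↔ shear κ p ∈
      (restrictSupport ℝ (qExponents : Set (Fin 2 →₀ ℕ))).prod
        (restrictSupport ℝ (rExponents κ : Set (Fin 2 →₀ ℕ))) := by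
  obtain ⟨Q, R⟩ := p
  rw [isSolution_iff, shear_apply, Submodule.mem_prod, mem_restrictSupport_qExponents_iff,
    mem_restrictSupport_rExponents_iff hκ, sub_add_cancel]

/-- for κ ≥ 2, the solution space of the system
`R_{x^κ}=0, R_{x²u} - ((κ-2)/3)Q_{x³}=0, R_{xu} - ((κ-1)/2)Q_{x²}=0,
R_{u²} - κ Q_{xu}=0, Q_u=0` for pairs of real polynomials `(Q,R)` in `(x,u)`
is a vector space of dimension exactly `κ + 4`. -/
theorem stmt1 (κ : ℕ) (hκ : 2 ≤ κ) :
    ∃ S : Submodule ℝ (MvPolynomial (Fin 2) ℝ × MvPolynomial (Fin 2) ℝ),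
      (S : Set (MvPolynomial (Fin 2) ℝ × MvPolynomial (Fin 2) ℝ)) =
        {p | dX^[κ] p.2 = 0 ∧
             dU (dX (dX p.2)) - MvPolynomial.C (((κ : ℝ) - 2) / 3) * dX (dX (dX p.1)) = 0 ∧
             dU (dX p.2) - MvPolynomial.C (((κ : ℝ) - 1) / 2) * dX (dX p.1) = 0 ∧
             dU (dU p.2) - MvPolynomial.C (κ : ℝ) * dU (dX p.1) = 0 ∧
             dU p.1 = 0} ∧
      Module.finrank ℝ S = κ + 4 := by
  refine ⟨((restrictSupport ℝ (qExponents : Set (Fin 2 →₀ ℕ))).prod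
    (restrictSupport ℝ (rExponents κ : Set (Fin 2 →₀ ℕ)))).comap (shear κ).toLinearMap, ?_, ?_⟩
  · ext p
    exact (isSolution_iff_shear_mem hκ p).symm
  · rw [Submodule.comap_equiv_eq_map_symm, LinearEquiv.finrank_map_eq, Submodule.finrank_prod,
      finrank_restrictSupport, finrank_restrictSupport, card_qExponents,
      card_rExponents (by omega)]
    omega
end

section
/- Let κ ≥ 3, let ε, α₀, α₁, β, γ₀, …, γ_{κ-1} be real constants with β ≠ 0 and α₁ - ε α₀ ≠ 0, and define the map h(x,u) = ((α₀ + α₁x)/(1 + εx), (βu + γ₀ + γ₁x + ⋯ + γ_{κ-1}x^{κ-1})/(1 + εx)^{κ-1}) on the domain where 1 + εx ≠ 0. Then for every polynomial p of degree ≤ κ-1, the image under h of the graph {(x, p(x))} is contained in the graph of another polynomial of degree ≤ κ-1. -/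
/-!
Put `t = (α₀ + α₁ x) / (1 + ε x)`. The Möbius map inverts to `x = (t - α₀) / (α₁ - ε t)`, and
`α₁ - ε t = (α₁ - ε α₀) / (1 + ε x)`. So if `R(X, Y)` is the homogenization in degree `κ - 1` of
`r(x) = β p(x) + ∑ γₗ xˡ`, then `R(t - α₀, α₁ - ε t) = (α₁ - ε α₀) ^ (κ - 1) r(x) / (1 + ε x) ^ (κ - 1)`,
and the left side is a polynomial of degree `≤ κ - 1` in `t`.
-/

open Polynomial

theorem MvPolynomial.polynomial_eval_aeval {K σ : Type*} [CommSemiring K] (g : σ → K[X])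
    (P : MvPolynomial σ K) (t : K) :
    (aeval g P).eval t = eval (fun i ↦ (g i).eval t) P := by
  rw [aeval_def, polynomial_eval_eval₂]
  congr
  ext
  simp

namespace Polynomial

variable {K : Type*} [Field K]

theorem exists_natDegree_le_eval_div_pow_eq_eval_moebius {r : K[X]} {m : ℕ}
    (hr : r.natDegree ≤ m) {a b c d : K} (hdet : a * d - b * c ≠ 0) :
    ∃ q : K[X], q.natDegree ≤ m ∧
      ∀ x : K, d + c * x ≠ 0 → r.eval x / (d + c * x) ^ m = q.eval ((b + a * x) / (d + c * x)) := by
  refine ⟨C ((a * d - b * c) ^ m)⁻¹ *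
    MvPolynomial.aeval ![C d * X - C b, C a - C c * X] (r.homogenize m), ?_, fun x hx ↦ ?_⟩
  · have hlin : ∀ i, (![C d * X - C b, C a - C c * X] i).natDegree ≤ 1 := by
      intro i
      fin_cases i <;> simp only [Fin.zero_eta, Fin.mk_one, Matrix.cons_val_zero,
        Matrix.cons_val_one] <;> compute_degree
    refine (natDegree_C_mul_le _ _).trans ?_
    simpa using MvPolynomial.aeval_natDegree_le _
      (isHomogeneous_homogenize r).totalDegree_le _ hlin
  · have hden : a - c * ((b + a * x) / (d + c * x)) = (a * d - b * c) / (d + c * x) := by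
      field_simp
      ring
    have hnum : d * ((b + a * x) / (d + c * x)) - b = x * ((a * d - b * c) / (d + c * x)) := by
      rw [mul_div_assoc', mul_div_assoc', div_sub' hx]
      ring
    have hden0 : (a * d - b * c) / (d + c * x) ≠ 0 := div_ne_zero hdet hx
    rw [eval_mul, eval_C, MvPolynomial.polynomial_eval_aeval,
      eval_homogenize hr _ (by simpa [hden] using hden0)]
    simp only [Matrix.cons_val_zero, Matrix.cons_val_one, eval_sub, eval_mul, eval_C, eval_X]
    rw [hnum, hden, mul_div_cancel_right₀ _ hden0, div_pow]
    generalize a * d - b * c = D at hdet ⊢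
    field_simp

end Polynomial

theorem stmt2_general (κ : ℕ) (ε α₀ α₁ β : ℝ) (γ : Fin κ → ℝ)
    (hα : α₁ - ε * α₀ ≠ 0) :
    ∀ p : Polynomial ℝ, p.natDegree ≤ κ - 1 →
      ∃ q : Polynomial ℝ, q.natDegree ≤ κ - 1 ∧
        ∀ x : ℝ, 1 + ε * x ≠ 0 →
          (β * p.eval x + ∑ l : Fin κ, γ l * x ^ (l : ℕ)) / (1 + ε * x) ^ (κ - 1)
            = q.eval ((α₀ + α₁ * x) / (1 + ε * x)) := by
  intro p hp
  set r : ℝ[X] := C β * p + ∑ l : Fin κ, C (γ l) * X ^ (l : ℕ)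
  have hr : r.natDegree ≤ κ - 1 := by
    refine natDegree_add_le_of_degree_le ((natDegree_C_mul_le _ _).trans hp) ?_
    refine natDegree_sum_le_of_forall_le _ _ fun l _ ↦ (natDegree_C_mul_X_pow_le _ _).trans ?_
    omega
  obtain ⟨q, hq, hrq⟩ := exists_natDegree_le_eval_div_pow_eq_eval_moebius hr
    (a := α₁) (b := α₀) (c := ε) (d := 1) (by rwa [mul_one, mul_comm α₀])
  refine ⟨q, hq, fun x hx ↦ ?_⟩
  simpa [r, eval_finsetSum] using hrq x hx

/-- the map `h(x,u) = ((α₀+α₁x)/(1+εx), (βu+γ₀+⋯+γ_{κ-1}x^{κ-1})/(1+εx)^{κ-1})`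
sends graphs of polynomials of degree ≤ κ-1 into graphs of polynomials of degree ≤ κ-1. -/
theorem stmt2 (κ : ℕ) (hκ : 3 ≤ κ) (ε α₀ α₁ β : ℝ) (γ : Fin κ → ℝ)
    (hβ : β ≠ 0) (hα : α₁ - ε * α₀ ≠ 0) :
    ∀ p : Polynomial ℝ, p.natDegree ≤ κ - 1 →
      ∃ q : Polynomial ℝ, q.natDegree ≤ κ - 1 ∧
        ∀ x : ℝ, 1 + ε * x ≠ 0 →
          (β * p.eval x + ∑ l : Fin κ, γ l * x ^ (l : ℕ)) / (1 + ε * x) ^ (κ - 1)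
            = q.eval ((α₀ + α₁ * x) / (1 + ε * x)) :=
  stmt2_general κ ε α₀ α₁ β γ hα
end

section
/- For integers n, m ≥ 1 and κ ≥ 3, the real vector space spanned by the vector fields on ℝ^n × ℝ^m given by ∂/∂x_{k₁}, x_{k₁}∂/∂x_{k₂}, x_{k₁}(Σ_l x_l∂/∂x_l + (κ-1)Σ_j u^j∂/∂u^j), u^{i₁}∂/∂u^{i₂}, and x^β∂/∂u^{i} for all multi-indices β with |β| ≤ κ-1, is closed under the Lie bracket of vector fields. -/
/-!
The bracket is bilinear on differentiable fields, so it suffices to bracket two generators.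
Among the generators other than `x^β ∂/∂u^i` this is a finite computation. Bracketing a generator
with `x^β ∂/∂u^i` differentiates the monomial: `∂/∂x_k` lowers its degree, `x_a ∂/∂x_b` keeps it,
`u^a ∂/∂u^b` only relabels `i`, and `x_a (Σ_l x_l ∂/∂x_l + (κ-1) Σ_j u^j ∂/∂u^j)` acts through the
Euler identity `Σ_l x_l ∂_l x^β = |β| x^β`, giving `(|β| - (κ-1)) x_a x^β ∂/∂u^i`. This raises the
degree by one, but its coefficient vanishes exactly when `|β| = κ - 1`.
-/

/-- Lie bracket of vector fields on `ℝ^n × ℝ^m`. -/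
noncomputable def vbracket {n m : ℕ}
    (V W : (Fin n → ℝ) × (Fin m → ℝ) → (Fin n → ℝ) × (Fin m → ℝ)) :
    (Fin n → ℝ) × (Fin m → ℝ) → (Fin n → ℝ) × (Fin m → ℝ) :=
  fun p => fderiv ℝ W p (V p) - fderiv ℝ V p (W p)

/-- The generators (e48): `∂/∂x_{k₁}`, `x_{k₁}∂/∂x_{k₂}`,
`x_{k₁}(Σ_l x_l∂/∂x_l + (κ-1)Σ_j u^j∂/∂u^j)`, `u^{i₁}∂/∂u^{i₂}`, `x^β∂/∂u^i` (|β| ≤ κ-1). -/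
def genSet (n m κ : ℕ) :
    Set ((Fin n → ℝ) × (Fin m → ℝ) → (Fin n → ℝ) × (Fin m → ℝ)) :=
  {V | ∃ k : Fin n, V = fun _ => (Pi.single k 1, 0)} ∪
  {V | ∃ k₁ k₂ : Fin n, V = fun p => (Pi.single k₂ (p.1 k₁), 0)} ∪
  {V | ∃ k₁ : Fin n, V = fun p =>
        (fun l => p.1 k₁ * p.1 l, fun j => ((κ : ℝ) - 1) * p.1 k₁ * p.2 j)} ∪
  {V | ∃ i₁ i₂ : Fin m, V = fun p => (0, Pi.single i₂ (p.2 i₁))} ∪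
  {V | ∃ (i : Fin m) (β : Fin n → ℕ), (∑ k, β k) ≤ κ - 1 ∧
        V = fun p => (0, Pi.single i (∏ k, p.1 k ^ β k))}

open Submodule

section Monomial

variable {ι : Type*}

lemma sub_single_add_single [DecidableEq ι] {β : ι → ℕ} {k : ι} (hk : β k ≠ 0) :
    β - Pi.single k 1 + Pi.single k 1 = β := by
  refine tsub_add_cancel_of_le fun l => ?_
  rcases eq_or_ne l k with rfl | hl
  · simpa using Nat.one_le_iff_ne_zero.2 hk
  · simp [hl]

variable [Fintype ι]

def monomialFn (β : ι → ℕ) (x : ι → ℝ) : ℝ := ∏ k, x k ^ β k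

lemma monomialFn_add (β γ : ι → ℕ) (x : ι → ℝ) :
    monomialFn (β + γ) x = monomialFn β x * monomialFn γ x := by
  simp only [monomialFn, Pi.add_apply, pow_add, Finset.prod_mul_distrib]

lemma differentiable_monomialFn (β : ι → ℕ) : Differentiable ℝ (monomialFn β) := by
  unfold monomialFn
  fun_prop

variable [DecidableEq ι]

lemma monomialFn_single (k : ι) (x : ι → ℝ) : monomialFn (Pi.single k 1) x = x k := by
  rw [monomialFn, Finset.prod_eq_single k (fun l _ hl => by simp [hl]) (by simp)]
  simp

lemma sum_sub_single_le (β : ι → ℕ) (k : ι) :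
    ∑ l, (β - Pi.single k 1 : ι → ℕ) l ≤ ∑ l, β l :=
  Finset.sum_le_sum fun _ _ => tsub_le_self

lemma sum_add_single (β : ι → ℕ) (k : ι) :
    ∑ l, (β + Pi.single k 1 : ι → ℕ) l = ∑ l, β l + 1 := by
  simp [Finset.sum_add_distrib]

lemma mul_monomialFn_sub_single {β : ι → ℕ} {k : ι} (hk : β k ≠ 0) (x : ι → ℝ) :
    x k * monomialFn (β - Pi.single k 1) x = monomialFn β x := by
  rw [← monomialFn_single k x, mul_comm, ← monomialFn_add, sub_single_add_single hk]

lemma monomialFn_sub_single_eq (β : ι → ℕ) (k : ι) (x : ι → ℝ) :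
    monomialFn (β - Pi.single k 1) x =
      x k ^ (β k - 1) * ∏ l ∈ Finset.univ.erase k, x l ^ β l := by
  rw [monomialFn, ← Finset.mul_prod_erase _ _ (Finset.mem_univ k)]
  congr 1
  · simp
  · exact Finset.prod_congr rfl fun l hl => by simp [Finset.ne_of_mem_erase hl]

lemma hasFDerivAt_monomialFn (β : ι → ℕ) (x : ι → ℝ) :
    HasFDerivAt (monomialFn β)
      (∑ k, (β k * monomialFn (β - Pi.single k 1) x) •
        (ContinuousLinearMap.proj k : (ι → ℝ) →L[ℝ] ℝ)) x := by
  have hpow (k : ι) : HasFDerivAt (fun y : ι → ℝ => y k ^ β k)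
      ((β k * x k ^ (β k - 1)) • (ContinuousLinearMap.proj k : (ι → ℝ) →L[ℝ] ℝ)) x :=
    (hasDerivAt_pow (β k) (x k)).comp_hasFDerivAt x (hasFDerivAt_apply k x)
  have hprod := HasFDerivAt.finsetProd (u := Finset.univ)
    (g := fun k (y : ι → ℝ) => y k ^ β k) fun k _ => hpow k
  refine hprod.congr_fderiv (Finset.sum_congr rfl fun k _ => ?_)
  rw [smul_smul, monomialFn_sub_single_eq]
  ring_nf

lemma fderiv_monomialFn_apply (β : ι → ℕ) (x v : ι → ℝ) :
    fderiv ℝ (monomialFn β) x v = ∑ k, β k * monomialFn (β - Pi.single k 1) x * v k := by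
  simp [(hasFDerivAt_monomialFn β x).fderiv, mul_assoc]

lemma fderiv_monomialFn_single (β : ι → ℕ) (x : ι → ℝ) (k : ι) (c : ℝ) :
    fderiv ℝ (monomialFn β) x (Pi.single k c) =
      β k * monomialFn (β - Pi.single k 1) x * c := by
  rw [fderiv_monomialFn_apply, Finset.sum_eq_single k (fun l _ hl => by simp [hl]) (by simp)]
  simp

lemma fderiv_monomialFn_self (β : ι → ℕ) (x : ι → ℝ) :
    fderiv ℝ (monomialFn β) x x = (∑ k, β k : ℕ) * monomialFn β x := by
  rw [fderiv_monomialFn_apply, Nat.cast_sum, Finset.sum_mul]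
  refine Finset.sum_congr rfl fun k _ => ?_
  rcases eq_or_ne (β k) 0 with hk | hk
  · simp [hk]
  · rw [mul_assoc, mul_comm _ (x k), mul_monomialFn_sub_single hk]

end Monomial

section VectorFields

variable {n m : ℕ}

local notation "𝕏" => (Fin n → ℝ) × (Fin m → ℝ)

lemma vbracket_comm (X Y : 𝕏 → 𝕏) : vbracket X Y = -vbracket Y X :=
  funext fun _ => (neg_sub _ _).symm

lemma vbracket_add_left {X₁ X₂ : 𝕏 → 𝕏} (Y : 𝕏 → 𝕏) (h₁ : Differentiable ℝ X₁)
    (h₂ : Differentiable ℝ X₂) : vbracket (X₁ + X₂) Y = vbracket X₁ Y + vbracket X₂ Y := by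
  funext p
  simp only [vbracket, Pi.add_apply, fderiv_add (h₁ p) (h₂ p), map_add, add_apply]
  abel

lemma vbracket_smul_left {X : 𝕏 → 𝕏} (Y : 𝕏 → 𝕏) (a : ℝ) (h : Differentiable ℝ X) :
    vbracket (a • X) Y = a • vbracket X Y := by
  funext p
  simp only [vbracket, Pi.smul_apply, fderiv_const_smul (h p), map_smul, smul_apply, smul_sub]

lemma vbracket_add_right (X : 𝕏 → 𝕏) {Y₁ Y₂ : 𝕏 → 𝕏} (h₁ : Differentiable ℝ Y₁)
    (h₂ : Differentiable ℝ Y₂) : vbracket X (Y₁ + Y₂) = vbracket X Y₁ + vbracket X Y₂ := by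
  rw [vbracket_comm, vbracket_add_left X h₁ h₂, vbracket_comm X Y₁, vbracket_comm X Y₂, neg_add]

lemma vbracket_smul_right (X : 𝕏 → 𝕏) {Y : 𝕏 → 𝕏} (a : ℝ) (h : Differentiable ℝ Y) :
    vbracket X (a • Y) = a • vbracket X Y := by
  rw [vbracket_comm, vbracket_smul_left X a h, vbracket_comm X Y, smul_neg]

@[simp] lemma vbracket_zero_left (Y : 𝕏 → 𝕏) : vbracket 0 Y = 0 := by
  funext p
  simp [vbracket]

@[simp] lemma vbracket_zero_right (X : 𝕏 → 𝕏) : vbracket X 0 = 0 := by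
  rw [vbracket_comm, vbracket_zero_left, neg_zero]

lemma differentiable_of_mem_span {S : Set (𝕏 → 𝕏)} (hS : ∀ V ∈ S, Differentiable ℝ V)
    {X : 𝕏 → 𝕏} (hX : X ∈ span ℝ S) : Differentiable ℝ X := by
  induction hX using span_induction with
  | mem V hV => exact hS V hV
  | zero => exact differentiable_const _
  | add _ _ _ _ h₁ h₂ => exact h₁.add h₂
  | smul a _ _ h => exact h.const_smul a

lemma vbracket_mem_span {S : Set (𝕏 → 𝕏)} (hdiff : ∀ V ∈ S, Differentiable ℝ V)
    (hS : ∀ V ∈ S, ∀ W ∈ S, vbracket V W ∈ span ℝ S) {X Y : 𝕏 → 𝕏} (hX : X ∈ span ℝ S)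
    (hY : Y ∈ span ℝ S) : vbracket X Y ∈ span ℝ S := by
  have hd {Z : 𝕏 → 𝕏} (hZ : Z ∈ span ℝ S) := differentiable_of_mem_span hdiff hZ
  induction hX, hY using span_induction₂ with
  | mem_mem V W hV hW => exact hS V hV W hW
  | zero_left => simp
  | zero_right => simp
  | add_left X₁ X₂ Y h₁ h₂ _ hX₁ hX₂ =>
    rw [vbracket_add_left Y (hd h₁) (hd h₂)]
    exact add_mem hX₁ hX₂
  | add_right X Y₁ Y₂ _ h₁ h₂ hY₁ hY₂ =>
    rw [vbracket_add_right X (hd h₁) (hd h₂)]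
    exact add_mem hY₁ hY₂
  | smul_left a X Y h _ hX =>
    rw [vbracket_smul_left Y a (hd h)]
    exact smul_mem _ a hX
  | smul_right a X Y _ h hY =>
    rw [vbracket_smul_right X a (hd h)]
    exact smul_mem _ a hY

lemma hasFDerivAt_fst_apply (k : Fin n) (p : 𝕏) :
    HasFDerivAt (fun q : 𝕏 => q.1 k) ((ContinuousLinearMap.proj k).comp (.fst ℝ _ _)) p :=
  hasFDerivAt_pi'.1 hasFDerivAt_fst k

lemma hasFDerivAt_snd_apply (i : Fin m) (p : 𝕏) :
    HasFDerivAt (fun q : 𝕏 => q.2 i) ((ContinuousLinearMap.proj i).comp (.snd ℝ _ _)) p :=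
  hasFDerivAt_pi'.1 hasFDerivAt_snd i

lemma hasFDerivAt_single_fst {φ : 𝕏 → ℝ} {φ' : 𝕏 →L[ℝ] ℝ} {p : 𝕏}
    (hφ : HasFDerivAt φ φ' p) (k : Fin n) :
    HasFDerivAt (fun q => ((Pi.single k (φ q) : Fin n → ℝ), (0 : Fin m → ℝ)))
      (φ'.smulRight (Pi.single k 1, 0)) p := by
  have hsmul : (fun q => ((Pi.single k (φ q) : Fin n → ℝ), (0 : Fin m → ℝ))) =
      fun q => φ q • ((Pi.single k 1, 0) : 𝕏) := by
    ext q l <;> simp [Pi.single_apply]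
  rw [hsmul]
  exact hφ.smul_const _

lemma hasFDerivAt_single_snd {φ : 𝕏 → ℝ} {φ' : 𝕏 →L[ℝ] ℝ} {p : 𝕏}
    (hφ : HasFDerivAt φ φ' p) (i : Fin m) :
    HasFDerivAt (fun q => ((0 : Fin n → ℝ), (Pi.single i (φ q) : Fin m → ℝ)))
      (φ'.smulRight (0, Pi.single i 1)) p := by
  have hsmul : (fun q => ((0 : Fin n → ℝ), (Pi.single i (φ q) : Fin m → ℝ))) =
      fun q => φ q • ((0, Pi.single i 1) : 𝕏) := by
    ext q l <;> simp [Pi.single_apply]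
  rw [hsmul]
  exact hφ.smul_const _

def translField (k : Fin n) : 𝕏 → 𝕏 := fun _ => (Pi.single k 1, 0)

def xLinField (k₁ k₂ : Fin n) : 𝕏 → 𝕏 := fun p => (Pi.single k₂ (p.1 k₁), 0)

def projField (κ : ℕ) (k : Fin n) : 𝕏 → 𝕏 :=
  fun p => (fun l => p.1 k * p.1 l, fun j => ((κ : ℝ) - 1) * p.1 k * p.2 j)

def uLinField (i₁ i₂ : Fin m) : 𝕏 → 𝕏 := fun p => (0, Pi.single i₂ (p.2 i₁))

def uField (i : Fin m) (f : (Fin n → ℝ) → ℝ) : 𝕏 → 𝕏 := fun p => (0, Pi.single i (f p.1))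

def radialField (κ : ℕ) : 𝕏 → 𝕏 := fun p => (p.1, ((κ : ℝ) - 1) • p.2)

lemma fderiv_translField (k : Fin n) (p : 𝕏) : fderiv ℝ (translField k) p = 0 :=
  fderiv_const_apply _

lemma fderiv_xLinField (k₁ k₂ : Fin n) (p v : 𝕏) :
    fderiv ℝ (xLinField k₁ k₂) p v = xLinField k₁ k₂ v := by
  rw [HasFDerivAt.fderiv (f := xLinField k₁ k₂)
    (hasFDerivAt_single_fst (hasFDerivAt_fst_apply k₁ p) k₂)]
  ext l <;> simp [xLinField, Pi.single_apply]

lemma fderiv_projField (κ : ℕ) (k : Fin n) (p v : 𝕏) :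
    fderiv ℝ (projField κ k) p v =
      (fun l => p.1 k * v.1 l + v.1 k * p.1 l,
        fun j => ((κ : ℝ) - 1) * (p.1 k * v.2 j + v.1 k * p.2 j)) := by
  have h : HasFDerivAt (projField κ k) _ p :=
    (hasFDerivAt_pi.2 fun l => (hasFDerivAt_fst_apply k p).mul (hasFDerivAt_fst_apply l p)).prodMk
      (hasFDerivAt_pi.2 fun j =>
        ((hasFDerivAt_fst_apply k p).const_mul ((κ : ℝ) - 1)).mul (hasFDerivAt_snd_apply j p))
  rw [h.fderiv]
  ext l <;> simp <;> ring

lemma fderiv_uLinField (i₁ i₂ : Fin m) (p v : 𝕏) :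
    fderiv ℝ (uLinField i₁ i₂) p v = uLinField i₁ i₂ v := by
  rw [HasFDerivAt.fderiv (f := uLinField i₁ i₂)
    (hasFDerivAt_single_snd (hasFDerivAt_snd_apply i₁ p) i₂)]
  ext l <;> simp [uLinField, Pi.single_apply]

lemma fderiv_uField (i : Fin m) {f : (Fin n → ℝ) → ℝ} {p : 𝕏} (hf : DifferentiableAt ℝ f p.1)
    (v : 𝕏) : fderiv ℝ (uField i f) p v = (0, Pi.single i (fderiv ℝ f p.1 v.1)) := by
  rw [HasFDerivAt.fderiv (f := uField i f)
    (hasFDerivAt_single_snd (hf.hasFDerivAt.comp p hasFDerivAt_fst) i)]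
  ext l <;> simp [Pi.single_apply]

lemma differentiable_translField (k : Fin n) : Differentiable ℝ (translField k : 𝕏 → 𝕏) :=
  differentiable_const _

lemma differentiable_xLinField (k₁ k₂ : Fin n) : Differentiable ℝ (xLinField k₁ k₂ : 𝕏 → 𝕏) :=
  fun p => (hasFDerivAt_single_fst (hasFDerivAt_fst_apply k₁ p) k₂).differentiableAt

lemma differentiable_projField (κ : ℕ) (k : Fin n) :
    Differentiable ℝ (projField κ k : 𝕏 → 𝕏) := by
  unfold projField
  fun_prop

lemma differentiable_uLinField (i₁ i₂ : Fin m) : Differentiable ℝ (uLinField i₁ i₂ : 𝕏 → 𝕏) :=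
  fun p => (hasFDerivAt_single_snd (hasFDerivAt_snd_apply i₁ p) i₂).differentiableAt

lemma differentiable_uField (i : Fin m) {f : (Fin n → ℝ) → ℝ} (hf : Differentiable ℝ f) :
    Differentiable ℝ (uField i f : 𝕏 → 𝕏) :=
  fun p => (hasFDerivAt_single_snd ((hf p.1).hasFDerivAt.comp p hasFDerivAt_fst) i).differentiableAt

lemma vbracket_translField_translField (k k' : Fin n) :
    vbracket (translField k : 𝕏 → 𝕏) (translField k') = 0 := by
  funext p
  simp [vbracket, fderiv_translField]

lemma vbracket_translField_xLinField (k a b : Fin n) :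
    vbracket (translField k : 𝕏 → 𝕏) (xLinField a b) = if a = k then translField b else 0 := by
  funext p
  split_ifs with h <;>
    simp [vbracket, fderiv_translField, fderiv_xLinField, translField, xLinField, h]

lemma vbracket_translField_projField (κ : ℕ) (k a : Fin n) :
    vbracket (translField k : 𝕏 → 𝕏) (projField κ a) =
      xLinField a k + if a = k then radialField κ else 0 := by
  funext p
  simp only [vbracket, fderiv_translField, fderiv_projField, zero_apply, sub_zero]
  split_ifs with h <;> ext l <;> simp [translField, xLinField, radialField, Pi.single_apply, h]

lemma vbracket_translField_uLinField (k : Fin n) (i₁ i₂ : Fin m) :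
    vbracket (translField k : 𝕏 → 𝕏) (uLinField i₁ i₂) = 0 := by
  funext p
  simp [vbracket, fderiv_translField, fderiv_uLinField, translField, uLinField]

lemma vbracket_translField_uField_monomialFn (k : Fin n) (i : Fin m) (β : Fin n → ℕ) :
    vbracket (translField k : 𝕏 → 𝕏) (uField i (monomialFn β)) =
      (β k : ℝ) • uField i (monomialFn (β - Pi.single k 1)) := by
  funext p
  simp [vbracket, fderiv_translField, fderiv_uField _ (differentiable_monomialFn β _), translField,
    uField, fderiv_monomialFn_single, ← Pi.single_smul']

lemma vbracket_xLinField_xLinField (a b c d : Fin n) :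
    vbracket (xLinField a b : 𝕏 → 𝕏) (xLinField c d) =
      (if c = b then xLinField a d else 0) - if a = d then xLinField c b else 0 := by
  funext p
  simp only [vbracket, fderiv_xLinField]
  split_ifs with h₁ h₂ h₂ <;> ext l <;> simp [xLinField, Pi.single_apply, h₁, h₂]

lemma vbracket_xLinField_projField (κ : ℕ) (a b c : Fin n) :
    vbracket (xLinField a b : 𝕏 → 𝕏) (projField κ c) = if c = b then projField κ a else 0 := by
  funext p
  simp only [vbracket, fderiv_xLinField, fderiv_projField]
  split_ifs with h <;> ext l <;> simp [xLinField, projField, Pi.single_apply, h, mul_assoc]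

lemma vbracket_xLinField_uLinField (a b : Fin n) (i₁ i₂ : Fin m) :
    vbracket (xLinField a b : 𝕏 → 𝕏) (uLinField i₁ i₂) = 0 := by
  funext p
  simp [vbracket, fderiv_xLinField, fderiv_uLinField, xLinField, uLinField]

lemma vbracket_xLinField_uField_monomialFn (a b : Fin n) (i : Fin m) (β : Fin n → ℕ) :
    vbracket (xLinField a b : 𝕏 → 𝕏) (uField i (monomialFn β)) =
      (β b : ℝ) • uField i (monomialFn (β - Pi.single b 1 + Pi.single a 1)) := by
  funext p
  simp [vbracket, fderiv_xLinField, fderiv_uField _ (differentiable_monomialFn β _), xLinField,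
    uField, fderiv_monomialFn_single, ← Pi.single_smul', monomialFn_add, monomialFn_single]
  ring

lemma vbracket_projField_projField (κ : ℕ) (a b : Fin n) :
    vbracket (projField κ a : 𝕏 → 𝕏) (projField κ b) = 0 := by
  funext p
  simp only [vbracket, fderiv_projField]
  ext l <;> simp [projField] <;> ring

lemma vbracket_projField_uLinField (κ : ℕ) (a : Fin n) (i₁ i₂ : Fin m) :
    vbracket (projField κ a : 𝕏 → 𝕏) (uLinField i₁ i₂) = 0 := by
  funext p
  simp only [vbracket, fderiv_projField, fderiv_uLinField]
  ext l <;> simp [projField, uLinField, Pi.single_apply, mul_assoc]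

lemma vbracket_projField_uField_monomialFn (κ : ℕ) (a : Fin n) (i : Fin m) (β : Fin n → ℕ) :
    vbracket (projField κ a : 𝕏 → 𝕏) (uField i (monomialFn β)) =
      (((∑ k, β k : ℕ) : ℝ) - ((κ : ℝ) - 1)) • uField i (monomialFn (β + Pi.single a 1)) := by
  funext p
  have hfst : (projField κ a p).1 = p.1 a • p.1 := rfl
  simp only [vbracket, fderiv_projField, fderiv_uField _ (differentiable_monomialFn β _), hfst,
    map_smul, fderiv_monomialFn_self]
  ext l <;> simp [uField, Pi.single_apply, monomialFn_add, monomialFn_single]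
  split_ifs <;> ring

lemma vbracket_uLinField_uLinField (a b c d : Fin m) :
    vbracket (uLinField a b : 𝕏 → 𝕏) (uLinField c d) =
      (if c = b then uLinField a d else 0) - if a = d then uLinField c b else 0 := by
  funext p
  simp only [vbracket, fderiv_uLinField]
  split_ifs with h₁ h₂ h₂ <;> ext l <;> simp [uLinField, Pi.single_apply, h₁, h₂]

lemma vbracket_uLinField_uField (a b i : Fin m) {f : (Fin n → ℝ) → ℝ} (hf : Differentiable ℝ f) :
    vbracket (uLinField a b : 𝕏 → 𝕏) (uField i f) = -if a = i then uField b f else 0 := by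
  funext p
  simp only [vbracket, fderiv_uLinField, fderiv_uField i (hf _)]
  split_ifs with h <;> ext l <;> simp [uLinField, uField, Pi.single_apply, h]

lemma vbracket_uField_uField (i i' : Fin m) {f g : (Fin n → ℝ) → ℝ} (hf : Differentiable ℝ f)
    (hg : Differentiable ℝ g) : vbracket (uField i f : 𝕏 → 𝕏) (uField i' g) = 0 := by
  funext p
  simp [vbracket, fderiv_uField _ (hf _), fderiv_uField _ (hg _), uField]

variable {κ : ℕ}

lemma genSet_eq : genSet n m κ =
    {V | ∃ k, V = translField k} ∪ {V | ∃ k₁ k₂, V = xLinField k₁ k₂} ∪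
      {V | ∃ k, V = projField κ k} ∪ {V | ∃ i₁ i₂, V = uLinField i₁ i₂} ∪
      {V | ∃ i β, ∑ k, β k ≤ κ - 1 ∧ V = uField i (monomialFn β)} :=
  rfl

lemma translField_mem_genSet (k : Fin n) : translField k ∈ genSet n m κ := by
  rw [genSet_eq]
  simp

lemma xLinField_mem_genSet (k₁ k₂ : Fin n) : xLinField k₁ k₂ ∈ genSet n m κ := by
  rw [genSet_eq]
  simp

lemma projField_mem_genSet (k : Fin n) : projField κ k ∈ genSet n m κ := by
  rw [genSet_eq]
  simp

lemma uLinField_mem_genSet (i₁ i₂ : Fin m) : uLinField i₁ i₂ ∈ genSet n m κ := by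
  rw [genSet_eq]
  simp

lemma uField_monomialFn_mem_genSet (i : Fin m) {β : Fin n → ℕ} (hβ : ∑ k, β k ≤ κ - 1) :
    uField i (monomialFn β) ∈ genSet n m κ := by
  rw [genSet_eq]
  exact Or.inr ⟨i, β, hβ, rfl⟩

lemma radialField_eq :
    (radialField κ : 𝕏 → 𝕏) = ∑ l, xLinField l l + ((κ : ℝ) - 1) • ∑ j, uLinField j j := by
  funext p
  ext l <;> simp [radialField, xLinField, uLinField, Finset.sum_apply, Prod.fst_sum, Prod.snd_sum,
    Pi.single_apply]

lemma radialField_mem_span : radialField κ ∈ span ℝ (genSet n m κ) := by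
  rw [radialField_eq]
  exact add_mem (sum_mem fun l _ => subset_span (xLinField_mem_genSet l l))
    (smul_mem _ _ (sum_mem fun j _ => subset_span (uLinField_mem_genSet j j)))

lemma differentiable_of_mem_genSet {V : 𝕏 → 𝕏} (hV : V ∈ genSet n m κ) :
    Differentiable ℝ V := by
  rw [genSet_eq] at hV
  rcases hV with ((((⟨k, rfl⟩ | ⟨k₁, k₂, rfl⟩) | ⟨k, rfl⟩) | ⟨i₁, i₂, rfl⟩) | ⟨i, β, -, rfl⟩)
  exacts [differentiable_translField k, differentiable_xLinField k₁ k₂,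
    differentiable_projField κ k, differentiable_uLinField i₁ i₂,
    differentiable_uField i (differentiable_monomialFn β)]

lemma vbracket_mem_span_of_swap {V W : 𝕏 → 𝕏} (h : vbracket W V ∈ span ℝ (genSet n m κ)) :
    vbracket V W ∈ span ℝ (genSet n m κ) := by
  rw [vbracket_comm]
  exact neg_mem h

lemma vbracket_translField_mem_span (k : Fin n) {W : 𝕏 → 𝕏} (hW : W ∈ genSet n m κ) :
    vbracket (translField k) W ∈ span ℝ (genSet n m κ) := by
  rw [genSet_eq] at hW
  rcases hW with ((((⟨k', rfl⟩ | ⟨a, b, rfl⟩) | ⟨a, rfl⟩) | ⟨i₁, i₂, rfl⟩) | ⟨i, β, hβ, rfl⟩)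
  · simp [vbracket_translField_translField]
  · rw [vbracket_translField_xLinField]
    split_ifs
    exacts [subset_span (translField_mem_genSet b), zero_mem _]
  · rw [vbracket_translField_projField]
    refine add_mem (subset_span (xLinField_mem_genSet a k)) ?_
    split_ifs
    exacts [radialField_mem_span, zero_mem _]
  · simp [vbracket_translField_uLinField]
  · rw [vbracket_translField_uField_monomialFn]
    exact smul_mem _ _ (subset_span
      (uField_monomialFn_mem_genSet i ((sum_sub_single_le β k).trans hβ)))

lemma vbracket_xLinField_mem_span (a b : Fin n) {W : 𝕏 → 𝕏} (hW : W ∈ genSet n m κ) :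
    vbracket (xLinField a b) W ∈ span ℝ (genSet n m κ) := by
  rw [genSet_eq] at hW
  rcases hW with ((((⟨k, rfl⟩ | ⟨c, d, rfl⟩) | ⟨c, rfl⟩) | ⟨i₁, i₂, rfl⟩) | ⟨i, β, hβ, rfl⟩)
  · exact vbracket_mem_span_of_swap (vbracket_translField_mem_span k (xLinField_mem_genSet a b))
  · rw [vbracket_xLinField_xLinField]
    refine sub_mem ?_ ?_ <;> split_ifs
    exacts [subset_span (xLinField_mem_genSet a d), zero_mem _,
      subset_span (xLinField_mem_genSet c b), zero_mem _]
  · rw [vbracket_xLinField_projField]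
    split_ifs
    exacts [subset_span (projField_mem_genSet a), zero_mem _]
  · simp [vbracket_xLinField_uLinField]
  · rw [vbracket_xLinField_uField_monomialFn]
    rcases eq_or_ne (β b) 0 with hb | hb
    · simp [hb]
    · refine smul_mem _ _ (subset_span (uField_monomialFn_mem_genSet i ?_))
      rwa [sum_add_single, ← sum_add_single (β - Pi.single b 1) b, sub_single_add_single hb]

lemma vbracket_projField_mem_span (hκ : 1 ≤ κ) (a : Fin n) {W : 𝕏 → 𝕏}
    (hW : W ∈ genSet n m κ) : vbracket (projField κ a) W ∈ span ℝ (genSet n m κ) := by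
  rw [genSet_eq] at hW
  rcases hW with ((((⟨k, rfl⟩ | ⟨c, d, rfl⟩) | ⟨c, rfl⟩) | ⟨i₁, i₂, rfl⟩) | ⟨i, β, hβ, rfl⟩)
  · exact vbracket_mem_span_of_swap (vbracket_translField_mem_span k (projField_mem_genSet a))
  · exact vbracket_mem_span_of_swap (vbracket_xLinField_mem_span c d (projField_mem_genSet a))
  · simp [vbracket_projField_projField]
  · simp [vbracket_projField_uLinField]
  · rw [vbracket_projField_uField_monomialFn]
    rcases hβ.lt_or_eq with hlt | heq
    · refine smul_mem _ _ (subset_span (uField_monomialFn_mem_genSet i ?_))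
      rw [sum_add_single]
      omega
    · simp [heq, Nat.cast_sub hκ]

lemma vbracket_uLinField_mem_span (a b : Fin m) {W : 𝕏 → 𝕏} (hW : W ∈ genSet n m κ) :
    vbracket (uLinField a b) W ∈ span ℝ (genSet n m κ) := by
  rw [genSet_eq] at hW
  rcases hW with ((((⟨k, rfl⟩ | ⟨c, d, rfl⟩) | ⟨c, rfl⟩) | ⟨c, d, rfl⟩) | ⟨i, β, hβ, rfl⟩)
  · exact vbracket_mem_span_of_swap (vbracket_translField_mem_span k (uLinField_mem_genSet a b))
  · exact vbracket_mem_span_of_swap (vbracket_xLinField_mem_span c d (uLinField_mem_genSet a b))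
  · simp [vbracket_comm _ (projField κ c), vbracket_projField_uLinField]
  · rw [vbracket_uLinField_uLinField]
    refine sub_mem ?_ ?_ <;> split_ifs
    exacts [subset_span (uLinField_mem_genSet a d), zero_mem _,
      subset_span (uLinField_mem_genSet c b), zero_mem _]
  · rw [vbracket_uLinField_uField a b i (differentiable_monomialFn β)]
    refine neg_mem ?_
    split_ifs
    exacts [subset_span (uField_monomialFn_mem_genSet b hβ), zero_mem _]

lemma vbracket_uField_monomialFn_mem_span (hκ : 1 ≤ κ) (i : Fin m) {β : Fin n → ℕ}
    (hβ : ∑ k, β k ≤ κ - 1) {W : 𝕏 → 𝕏} (hW : W ∈ genSet n m κ) :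
    vbracket (uField i (monomialFn β)) W ∈ span ℝ (genSet n m κ) := by
  have hV := uField_monomialFn_mem_genSet (m := m) i hβ
  rw [genSet_eq] at hW
  rcases hW with ((((⟨k, rfl⟩ | ⟨c, d, rfl⟩) | ⟨c, rfl⟩) | ⟨c, d, rfl⟩) | ⟨i', β', -, rfl⟩)
  · exact vbracket_mem_span_of_swap (vbracket_translField_mem_span k hV)
  · exact vbracket_mem_span_of_swap (vbracket_xLinField_mem_span c d hV)
  · exact vbracket_mem_span_of_swap (vbracket_projField_mem_span hκ c hV)
  · exact vbracket_mem_span_of_swap (vbracket_uLinField_mem_span c d hV)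
  · simp [vbracket_uField_uField i i' (differentiable_monomialFn β) (differentiable_monomialFn β')]

lemma vbracket_mem_span_of_mem_genSet (hκ : 1 ≤ κ) {V W : 𝕏 → 𝕏} (hV : V ∈ genSet n m κ)
    (hW : W ∈ genSet n m κ) : vbracket V W ∈ span ℝ (genSet n m κ) := by
  rw [genSet_eq] at hV
  rcases hV with ((((⟨k, rfl⟩ | ⟨a, b, rfl⟩) | ⟨a, rfl⟩) | ⟨a, b, rfl⟩) | ⟨i, β, hβ, rfl⟩)
  exacts [vbracket_translField_mem_span k hW, vbracket_xLinField_mem_span a b hW,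
    vbracket_projField_mem_span hκ a hW, vbracket_uLinField_mem_span a b hW,
    vbracket_uField_monomialFn_mem_span hκ i hβ hW]

end VectorFields

theorem stmt10_general (n m κ : ℕ) (hκ : 3 ≤ κ) :
    ∀ X Y : (Fin n → ℝ) × (Fin m → ℝ) → (Fin n → ℝ) × (Fin m → ℝ),
      X ∈ Submodule.span ℝ (genSet n m κ) → Y ∈ Submodule.span ℝ (genSet n m κ) →
      vbracket X Y ∈ Submodule.span ℝ (genSet n m κ) :=
  fun _ _ hX hY => vbracket_mem_span (fun _ => differentiable_of_mem_genSet)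
    (fun _ hV _ hW => vbracket_mem_span_of_mem_genSet (by omega) hV hW) hX hY

/-- the span of the vector fields (e48) is closed under the Lie bracket. -/
theorem stmt10 (n m κ : ℕ) (hn : 1 ≤ n) (hm : 1 ≤ m) (hκ : 3 ≤ κ) :
    ∀ X Y : (Fin n → ℝ) × (Fin m → ℝ) → (Fin n → ℝ) × (Fin m → ℝ),
      X ∈ Submodule.span ℝ (genSet n m κ) → Y ∈ Submodule.span ℝ (genSet n m κ) →
      vbracket X Y ∈ Submodule.span ℝ (genSet n m κ) :=
  stmt10_general n m κ hκ
end

section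
/- Let κ ≥ 3 and let ε₁,…,ε_n ∈ ℝ, let (β^j_{i}) be an invertible m×m matrix, let α_{l,0}, α_{l,k} ∈ ℝ define an invertible affine map of ℝ^n composed with the fractional transformation, and let γ^{λ,j}_{k₁,…,k_λ} ∈ ℝ. Then the map (x,u) ↦ ( ((α_{l,0} + Σ_k α_{l,k}x_k)/(1 + Σ_k ε_k x_k))_l , ((Σ_i β^j_i u^i + Σ_{λ=0}^{κ-1} Σ γ^{λ,j} x_{k₁}⋯x_{k_λ})/(1 + Σ_k ε_k x_k)^{κ-1})_j ) sends the graph of every polynomial map ℝ^n → ℝ^m of degree ≤ κ-1 into the graph of another polynomial map of degree ≤ κ-1 (on the domain where 1 + Σ_k ε_k x_k ≠ 0 and the x-component map is invertible). -/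
open MvPolynomial


/-- formula (e49). The map
`(x,u) ↦ ((α₀+αx)/(1+εx), (βu + G(x))/(1+εx)^{κ-1})` sends the graph of every polynomial
map of degree ≤ κ-1 into the graph of another polynomial map of degree ≤ κ-1. -/
theorem stmt15 (n m κ : ℕ) (hn : 1 ≤ n) (hm : 1 ≤ m) (hκ : 3 ≤ κ)
    (ε : Fin n → ℝ) (βm : Matrix (Fin m) (Fin m) ℝ) (hβ : IsUnit βm)
    (α0 : Fin n → ℝ) (αm : Fin n → Fin n → ℝ)
    (hα : (Matrix.of (fun r c : Option (Fin n) =>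
        match r, c with
        | none, none => (1 : ℝ)
        | none, some k => ε k
        | some l, none => α0 l
        | some l, some k => αm l k)).det ≠ 0)
    (G : Fin m → MvPolynomial (Fin n) ℝ) (hG : ∀ j, (G j).totalDegree ≤ κ - 1) :
    ∀ P : Fin m → MvPolynomial (Fin n) ℝ, (∀ i, (P i).totalDegree ≤ κ - 1) →
      ∃ P' : Fin m → MvPolynomial (Fin n) ℝ, (∀ j, (P' j).totalDegree ≤ κ - 1) ∧
        ∀ x : Fin n → ℝ, (1 + ∑ k, ε k * x k) ≠ 0 →
          ∀ j : Fin m,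
            (∑ i, βm j i * MvPolynomial.eval x (P i) + MvPolynomial.eval x (G j)) /
                (1 + ∑ k, ε k * x k) ^ (κ - 1)
              = MvPolynomial.eval
                  (fun l => (α0 l + ∑ k, αm l k * x k) / (1 + ∑ k, ε k * x k)) (P' j) := by
  intro P hP
  set d : ℕ := κ - 1 with hd
  set A : Matrix (Option (Fin n)) (Option (Fin n)) ℝ := (Matrix.of (fun r c : Option (Fin n) =>
        match r, c with
        | none, none => (1 : ℝ)
        | none, some k => ε k
        | some l, none => α0 l
        | some l, some k => αm l k)) with hA
  set B : Matrix (Option (Fin n)) (Option (Fin n)) ℝ := A⁻¹ with hB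
  have hBA : B * A = 1 := Matrix.nonsing_inv_mul A (isUnit_iff_ne_zero.mpr hα)
  -- the linear forms giving the inverse projective transformation
  set L : Option (Fin n) → MvPolynomial (Fin n) ℝ :=
    fun r => C (B r none) + ∑ k, C (B r (some k)) * X k with hLdef
  have hL : ∀ r, (L r).totalDegree ≤ 1 := by
    intro r
    refine le_trans (totalDegree_add _ _) (max_le (by simp) ?_)
    refine le_trans (totalDegree_finset_sum _ _) (Finset.sup_le fun k _ => ?_)
    refine le_trans (totalDegree_mul _ _) ?_
    simp [totalDegree_X]
  -- the substitution operator
  set T : MvPolynomial (Fin n) ℝ → MvPolynomial (Fin n) ℝ :=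
    fun Q => ∑ a ∈ Q.support, C (Q.coeff a) * (L none) ^ (d - a.sum fun _ e => e)
      * ∏ k, (L (some k)) ^ a k with hT
  set F : Fin m → MvPolynomial (Fin n) ℝ :=
    fun j => (∑ i, C (βm j i) * P i) + G j with hF
  have hFd : ∀ j, (F j).totalDegree ≤ d := by
    intro j
    refine le_trans (totalDegree_add _ _) (max_le ?_ (hG j))
    refine le_trans (totalDegree_finset_sum _ _) (Finset.sup_le fun i _ => ?_)
    refine le_trans (totalDegree_mul _ _) ?_
    simpa using hP i
  refine ⟨fun j => T (F j), fun j => ?_, ?_⟩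
  · -- degree bound
    refine le_trans (totalDegree_finset_sum _ _) (Finset.sup_le fun a ha => ?_)
    have hs : (a.sum fun _ e => e) ≤ d := le_trans (le_totalDegree ha) (hFd j)
    refine le_trans (totalDegree_mul _ _) ?_
    have h1 : (C ((F j).coeff a) * (L none) ^ (d - a.sum fun _ e => e)).totalDegree
        ≤ d - a.sum fun _ e => e := by
      refine le_trans (totalDegree_mul _ _) ?_
      simp only [totalDegree_C, zero_add]
      refine le_trans (totalDegree_pow _ _) ?_
      calc (d - a.sum fun _ e => e) * (L none).totalDegree
          ≤ (d - a.sum fun _ e => e) * 1 := Nat.mul_le_mul_left _ (hL none)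
        _ = _ := Nat.mul_one _
    have h2 : (∏ k, (L (some k)) ^ a k).totalDegree ≤ a.sum fun _ e => e := by
      refine le_trans (totalDegree_finset_prod _ _) ?_
      have : ∀ k : Fin n, ((L (some k)) ^ a k).totalDegree ≤ a k := by
        intro k
        refine le_trans (totalDegree_pow _ _) ?_
        calc a k * (L (some k)).totalDegree ≤ a k * 1 := Nat.mul_le_mul_left _ (hL _)
          _ = a k := Nat.mul_one _
      refine le_trans (Finset.sum_le_sum fun k _ => this k) ?_
      rw [Finsupp.sum_fintype]
      intro k; rfl
    calc _ ≤ (d - a.sum fun _ e => e) + a.sum fun _ e => e := Nat.add_le_add h1 h2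
      _ = d := Nat.sub_add_cancel hs
  · -- evaluation identity
    intro x hx j
    set t : ℝ := 1 + ∑ k, ε k * x k with ht
    set y : Fin n → ℝ := fun l => (α0 l + ∑ k, αm l k * x k) / t with hy
    set v : Option (Fin n) → ℝ := fun o => o.elim 1 x with hv
    -- B applied to (t, z) gives back v
    have hAv : A.mulVec v = fun o => o.elim t (fun l => α0 l + ∑ k, αm l k * x k) := by
      funext o
      cases o with
      | none =>
        simp [Matrix.mulVec, dotProduct, hA, hv, Fintype.sum_option, ht]
      | some l =>
        simp [Matrix.mulVec, dotProduct, hA, hv, Fintype.sum_option]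
    have hBAv : B.mulVec (A.mulVec v) = v := by
      rw [Matrix.mulVec_mulVec, hBA, Matrix.one_mulVec]
    have key : ∀ r, B r none * t + ∑ k, B r (some k) * (α0 k + ∑ k', αm k k' * x k') = v r := by
      intro r
      have := congrFun hBAv r
      rw [hAv] at this
      simpa [Matrix.mulVec, dotProduct, Fintype.sum_option] using this
    have hLy : ∀ r, eval y (L r) = v r / t := by
      intro r
      have : eval y (L r) = B r none + ∑ k, B r (some k) * y k := by
        simp [hLdef]
      rw [this, ← key r, add_div]
      congr 1
      · exact (mul_div_cancel_right₀ _ hx).symm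
      · rw [Finset.sum_div]
        exact Finset.sum_congr rfl fun k _ => (mul_div_assoc _ _ _).symm
    -- now compute
    have hevF : eval x (F j) = ∑ i, βm j i * eval x (P i) + eval x (G j) := by
      simp [hF]
    rw [← hevF]
    rw [eval_eq' x (F j)]
    simp only [hT, map_sum, map_mul, map_pow, eval_C, map_prod]
    rw [Finset.sum_div]
    refine Finset.sum_congr rfl fun a ha => ?_
    have hs : (a.sum fun _ e => e) ≤ d := le_trans (le_totalDegree ha) (hFd j)
    rw [hLy none]
    have hLk : ∀ k : Fin n, eval y (L (some k)) = x k / t := fun k => hLy (some k)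
    simp only [hLk]
    have hvn : v none = 1 := rfl
    rw [hvn]
    have hprod : ∏ k, (x k / t) ^ a k = (∏ k, x k ^ a k) / t ^ (a.sum fun _ e => e) := by
      rw [Finsupp.sum_fintype _ _ (fun k => rfl)]
      rw [← Finset.prod_pow_eq_pow_sum]
      rw [← Finset.prod_div_distrib]
      refine Finset.prod_congr rfl fun k _ => ?_
      rw [div_pow]
    rw [hprod]
    have htd : t ^ (d - a.sum fun _ e => e) * t ^ (a.sum fun _ e => e) = t ^ d := by
      rw [← pow_add, Nat.sub_add_cancel hs]
    rw [div_pow, one_pow, mul_one_div, div_mul_div_comm, htd]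
end
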